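/- arXiv:1910.03836 — 3 statements merged into one kernel-verified Lean document; each statement's English description precedes it below -/
import Mathlib

section
/- Let Γ be a Jordan curve in the Euclidean plane and let C be a simple continuous curve (a continuous injective image of a nondegenerate compact interval). Then Γ contains only finitely many congruent copies of C that are mutually disjoint apart from possibly their endpoints; i.e., any family of isometric images of C contained in Γ, any two of which intersect in at most common endpoints, is finite. -/
/-!
Transport `Γ` to the unit circle by the homeomorphism. A copy of `C` is a connected set whose
endpoints are at the fixed distance `dist (c a) (c b) > 0`; by uniform continuity its image is a
connected subset of the circle containing two points at distance at least some `δ > 0`, and so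
it contains an arc `{exp (i t) | |t - m| ≤ δ / 2}` with centre `m ∈ [0, 2π)`. Two distinct copies
meet in at most two points, whereas overlapping arcs share infinitely many; hence the centres are
`δ`-separated in `[0, 2π)`, and there are only finitely many of them.
-/

open Metric Set Complex
open scoped Real

theorem dist_exp_mul_I_le (s t : ℝ) : dist (cexp (s * I)) (cexp (t * I)) ≤ |s - t| :=
  calc dist (cexp (s * I)) (cexp (t * I)) = ‖cexp (t * I) * (cexp (I * ↑(s - t)) - 1)‖ := by
        rw [dist_eq_norm, mul_sub, ← exp_add, mul_one]; congr 3; push_cast; ring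
    _ ≤ |s - t| := by
        rw [norm_mul, norm_exp_ofReal_mul_I, one_mul, ← Real.norm_eq_abs]
        exact Real.norm_exp_I_mul_ofReal_sub_one_le

theorem TotallyBounded.finite_of_pairwise_le_dist {X : Type*} [PseudoMetricSpace X] {s : Set X}
    (hs : TotallyBounded s) {ε : ℝ} (hε : 0 < ε) (hsep : s.Pairwise fun x y => ε ≤ dist x y) :
    s.Finite := by
  obtain ⟨t, -, ht, hcover⟩ := finite_approx_of_totallyBounded hs (ε / 2) (half_pos hε)
  have hnear : ∀ x ∈ s, ∃ y ∈ t, dist x y < ε / 2 := fun x hx => by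
    simpa using hcover hx
  choose! g hgt hg using hnear
  refine (ht.subset (image_subset_iff.2 hgt)).of_finite_image fun x hx x' hx' hxx' => ?_
  by_contra hne
  have hx'near : dist x' (g x) < ε / 2 := hxx' ▸ hg x' hx'
  linarith [hsep hx hx' hne, hg x hx, dist_triangle_right x x' (g x)]

theorem mem_slitPlane_of_mem_sphere {z : ℂ} (hz : z ∈ sphere (0 : ℂ) 1) (hz' : z ≠ -1) :
    z ∈ slitPlane := by
  rw [mem_sphere_zero_iff_norm] at hz
  refine mem_slitPlane_iff_arg.2 ⟨fun h => hz' ?_, by rintro rfl; simp at hz⟩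
  rw [← norm_mul_exp_arg_mul_I z, hz, h]
  simp

theorem exp_arg_mul_I_of_mem_sphere {z : ℂ} (hz : z ∈ sphere (0 : ℂ) 1) :
    cexp (arg z * I) = z := by
  rw [mem_sphere_zero_iff_norm] at hz
  simpa [hz] using norm_mul_exp_arg_mul_I z

theorem infinite_image_exp_mul_I_Icc {u v : ℝ} (huv : u < v) :
    ((fun t : ℝ => cexp (t * I)) '' Icc u v).Infinite := by
  set w := min v (u + π)
  have huw : u < w := lt_min huv (by linarith [Real.pi_pos])
  have hinj : InjOn (fun t : ℝ => cexp (t * I)) (Icc u w) := fun s hs t ht hst =>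
    Circle.exp_injOn_Icc (by linarith [min_le_right v (u + π), Real.pi_pos]) hs ht
      (Circle.ext (by simpa [Circle.coe_exp] using hst))
  exact ((Icc_infinite huw).image hinj).mono (image_mono (Icc_subset_Icc_right (min_le_left _ _)))

theorem exists_mapsTo_exp_mul_I_Icc_of_neg_one_notMem {A : Set ℂ} (hA : A ⊆ sphere 0 1)
    (hneg : -1 ∉ A) (hconn : IsPreconnected A) {x y : ℂ} (hx : x ∈ A) (hy : y ∈ A) {r : ℝ}
    (hr : 2 * r ≤ dist x y) :
    ∃ m, MapsTo (fun t : ℝ => cexp (t * I)) (Icc (m - r) (m + r)) A := by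
  have hcont : ContinuousOn arg A := fun z hz =>
    (continuousAt_arg (mem_slitPlane_of_mem_sphere (hA hz) (ne_of_mem_of_not_mem hz hneg)))
      |>.continuousWithinAt
  have harg : uIcc (arg x) (arg y) ⊆ arg '' A :=
    (hconn.image arg hcont).ordConnected.uIcc_subset (mem_image_of_mem _ hx) (mem_image_of_mem _ hy)
  have hdist : dist x y ≤ |arg x - arg y| := by
    simpa only [exp_arg_mul_I_of_mem_sphere (hA hx), exp_arg_mul_I_of_mem_sphere (hA hy)]
      using dist_exp_mul_I_le (arg x) (arg y)
  refine ⟨(arg x + arg y) / 2, fun t ht => ?_⟩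
  have htmem : t ∈ uIcc (arg x) (arg y) := by
    rcases le_total (arg x) (arg y) with h | h
    · rw [abs_of_nonpos (sub_nonpos.2 h)] at hdist
      exact Icc_subset_uIcc ⟨by linarith [ht.1], by linarith [ht.2]⟩
    · rw [abs_of_nonneg (sub_nonneg.2 h)] at hdist
      exact Icc_subset_uIcc' ⟨by linarith [ht.1], by linarith [ht.2]⟩
  obtain ⟨z, hz, rfl⟩ := harg htmem
  simpa only [exp_arg_mul_I_of_mem_sphere (hA hz)] using hz

/-- Rotating a point missing from `A` to `-1` reduces to the case where `arg` is continuous on `A`. -/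
theorem exists_mapsTo_exp_mul_I_Icc {A : Set ℂ} (hA : A ⊆ sphere 0 1) (hconn : IsPreconnected A)
    {x y : ℂ} (hx : x ∈ A) (hy : y ∈ A) {r : ℝ} (hr : 2 * r ≤ dist x y) :
    ∃ m, MapsTo (fun t : ℝ => cexp (t * I)) (Icc (m - r) (m + r)) A := by
  by_cases hfull : sphere (0 : ℂ) 1 ⊆ A
  · exact ⟨0, fun t _ => hfull (by simp)⟩
  obtain ⟨p, hp, hpA⟩ := not_subset.1 hfull
  set θ := π - arg p
  set ρ : ℂ → ℂ := fun z => cexp (θ * I) * z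
  have hρinj : Function.Injective ρ := mul_right_injective₀ (exp_ne_zero _)
  have hρp : ρ p = -1 := by
    rw [← exp_arg_mul_I_of_mem_sphere hp]
    simp only [ρ, θ, ← exp_add]
    push_cast
    ring_nf
    exact exp_pi_mul_I
  have hρdist : ∀ z w, dist (ρ z) (ρ w) = dist z w := fun z w => by
    simp only [ρ, dist_eq_norm, ← mul_sub, norm_mul, norm_exp_ofReal_mul_I, one_mul]
  obtain ⟨m, hm⟩ := exists_mapsTo_exp_mul_I_Icc_of_neg_one_notMem (A := ρ '' A)
    (by rintro _ ⟨z, hz, rfl⟩; simpa [ρ] using hA hz)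
    (fun ⟨z, hz, hz'⟩ => hpA (hρinj (hz'.trans hρp.symm) ▸ hz))
    (hconn.image ρ (by fun_prop)) (mem_image_of_mem ρ hx) (mem_image_of_mem ρ hy)
    (by rwa [hρdist])
  refine ⟨m - θ, fun t ht => ?_⟩
  obtain ⟨z, hz, hzt⟩ := hm (show t + θ ∈ Icc (m - r) (m + r) from
    ⟨by linarith [ht.1], by linarith [ht.2]⟩)
  have : ρ z = ρ (cexp (t * I)) := by
    simp only [hzt, ρ, ← exp_add]
    push_cast
    ring_nf
  simpa only [hρinj this] using hz

theorem exists_mem_Ico_mapsTo_exp_mul_I_Icc {A : Set ℂ} (hA : A ⊆ sphere 0 1)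
    (hconn : IsPreconnected A) {x y : ℂ} (hx : x ∈ A) (hy : y ∈ A) {r : ℝ}
    (hr : 2 * r ≤ dist x y) :
    ∃ m ∈ Ico 0 (2 * π), MapsTo (fun t : ℝ => cexp (t * I)) (Icc (m - r) (m + r)) A := by
  obtain ⟨m, hm⟩ := exists_mapsTo_exp_mul_I_Icc hA hconn hx hy hr
  refine ⟨toIcoMod Real.two_pi_pos 0 m, toIcoMod_mem_Ico' _ _, fun t ht => ?_⟩
  have hshift := self_sub_toIcoMod_eq_mul Real.two_pi_pos 0 m
  set n := toIcoDiv Real.two_pi_pos 0 m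
  have : cexp ((t + n * (2 * π) : ℝ) * I) ∈ A := hm (show t + n * (2 * π) ∈ Icc (m - r) (m + r)
    from ⟨by linarith [ht.1], by linarith [ht.2]⟩)
  rwa [show ((t + n * (2 * π) : ℝ) : ℂ) * I = t * I + n * (2 * π * I) by push_cast; ring,
    exp_add, exp_int_mul_two_pi_mul_I, mul_one] at this

theorem infinite_inter_of_mapsTo_exp_mul_I_Icc {A B : Set ℂ} {m m' r : ℝ}
    (hA : MapsTo (fun t : ℝ => cexp (t * I)) (Icc (m - r) (m + r)) A)
    (hB : MapsTo (fun t : ℝ => cexp (t * I)) (Icc (m' - r) (m' + r)) B)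
    (hmm' : dist m m' < 2 * r) : (A ∩ B).Infinite := by
  rw [Real.dist_eq, abs_lt] at hmm'
  have hlt : max (m - r) (m' - r) < min (m + r) (m' + r) := by
    simp only [max_lt_iff, lt_min_iff]
    refine ⟨⟨?_, ?_⟩, ?_, ?_⟩ <;> linarith
  refine (infinite_image_exp_mul_I_Icc hlt).mono ?_
  rw [← Icc_inter_Icc]
  exact (image_inter_subset _ _ _).trans (inter_subset_inter hA.image_subset hB.image_subset)

theorem finite_of_isPreconnected_subset_sphere {S : Set (Set ℂ)} {δ : ℝ} (hδ : 0 < δ)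
    (hsphere : ∀ A ∈ S, A ⊆ sphere 0 1) (hconn : ∀ A ∈ S, IsPreconnected A)
    (hwide : ∀ A ∈ S, ∃ x ∈ A, ∃ y ∈ A, δ ≤ dist x y)
    (hinter : S.Pairwise fun A B => (A ∩ B).Finite) : S.Finite := by
  have harc : ∀ A ∈ S, ∃ m ∈ Ico 0 (2 * π),
      MapsTo (fun t : ℝ => cexp (t * I)) (Icc (m - δ / 2) (m + δ / 2)) A := fun A hA => by
    obtain ⟨x, hx, y, hy, hxy⟩ := hwide A hA
    exact exists_mem_Ico_mapsTo_exp_mul_I_Icc (hsphere A hA) (hconn A hA) hx hy (by linarith)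
  choose! m hm hmaps using harc
  have hsep : S.Pairwise fun A B => δ ≤ dist (m A) (m B) := fun A hA B hB hAB => by
    by_contra! h
    exact infinite_inter_of_mapsTo_exp_mul_I_Icc (hmaps A hA) (hmaps B hB) (by linarith)
      (hinter hA hB hAB)
  have hinj : InjOn m S := fun A hA B hB h => by
    by_contra hAB
    have : δ ≤ dist (m A) (m B) := hsep hA hB hAB
    rw [h, dist_self] at this
    linarith
  refine Finite.of_finite_image ?_ hinj
  refine TotallyBounded.finite_of_pairwise_le_dist ?_ hδ (hinj.pairwise_image.2 hsep)
  exact isCompact_Icc.totallyBounded.subset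
    (image_subset_iff.2 fun A hA => Ico_subset_Icc_self (hm A hA) : m '' S ⊆ Icc 0 (2 * π))

theorem finite_of_isPreconnected_subset_of_homeomorph_sphere {E : Type*} [MetricSpace E]
    {Γ : Set E} (h : Γ ≃ₜ sphere (0 : ℂ) 1) {S : Set (Set E)} {d : ℝ} (hd : 0 < d)
    (hsub : ∀ K ∈ S, K ⊆ Γ) (hconn : ∀ K ∈ S, IsPreconnected K)
    (hwide : ∀ K ∈ S, ∃ x ∈ K, ∃ y ∈ K, d ≤ dist x y)
    (hinter : S.Pairwise fun K L => (K ∩ L).Finite) : S.Finite := by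
  obtain ⟨δ, hδ, hclose⟩ := Metric.uniformContinuous_iff.1
    (CompactSpace.uniformContinuous_of_continuous h.symm.continuous) d hd
  set φ : Γ → ℂ := fun p => h p
  have hφinj : Function.Injective φ := Subtype.val_injective.comp h.injective
  set Φ : Set E → Set ℂ := fun K => φ '' (Subtype.val ⁻¹' K)
  have hΦinj : InjOn Φ S := fun K hK L hL hKL => by
    have := (Subtype.preimage_coe_eq_preimage_coe_iff (s := Γ)).1 (image_injective.2 hφinj hKL)
    rwa [inter_eq_right.2 (hsub K hK), inter_eq_right.2 (hsub L hL)] at this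
  refine Finite.of_finite_image ?_ hΦinj
  refine finite_of_isPreconnected_subset_sphere hδ ?_ ?_ ?_ ?_
  · rintro _ ⟨K, -, rfl⟩ _ ⟨p, -, rfl⟩
    exact (h p).2
  · rintro _ ⟨K, hK, rfl⟩
    refine IsPreconnected.image ?_ φ (by fun_prop)
    rw [← Topology.IsInducing.subtypeVal.isPreconnected_image, image_preimage_eq_inter_range,
      Subtype.range_coe, inter_eq_left.2 (hsub K hK)]
    exact hconn K hK
  · rintro _ ⟨K, hK, rfl⟩
    obtain ⟨x, hx, y, hy, hxy⟩ := hwide K hK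
    refine ⟨φ ⟨x, hsub K hK hx⟩, mem_image_of_mem φ hx, φ ⟨y, hsub K hK hy⟩,
      mem_image_of_mem φ hy, not_lt.1 fun hlt => ?_⟩
    have := hclose (a := h ⟨x, hsub K hK hx⟩) (b := h ⟨y, hsub K hK hy⟩) hlt
    simp only [Homeomorph.symm_apply_apply, Subtype.dist_eq] at this
    linarith
  · rintro _ ⟨K, hK, rfl⟩ _ ⟨L, hL, rfl⟩ hKL
    rw [← image_inter hφinj, ← preimage_inter]
    exact ((hinter hK hL (ne_of_apply_ne Φ hKL)).preimage Subtype.val_injective.injOn).image φ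

/-- Let `Γ` be a Jordan curve (a homeomorphic image of the circle) and
let `C = c '' [a,b]` be a simple continuous curve. Any family of congruent (isometric)
copies of `C` contained in `Γ`, any two of which intersect in at most common endpoints,
is finite. -/
theorem finitely_many_disjoint_congruent_copies_in_jordan_curve
    (Γ : Set ℂ) (hΓ : Nonempty (Γ ≃ₜ Metric.sphere (0:ℂ) 1))
    (a b : ℝ) (hab : a < b) (c : ℝ → ℂ)
    (hc : ContinuousOn c (Set.Icc a b)) (hinj : Set.InjOn c (Set.Icc a b))
    (F : Set (ℂ ≃ᵢ ℂ))
    (hsub : ∀ f ∈ F, f '' (c '' Set.Icc a b) ⊆ Γ)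
    (hdisj : ∀ f ∈ F, ∀ g ∈ F,
      f '' (c '' Set.Icc a b) ≠ g '' (c '' Set.Icc a b) →
      (f '' (c '' Set.Icc a b)) ∩ (g '' (c '' Set.Icc a b)) ⊆
        ({f (c a), f (c b)} : Set ℂ) ∩ ({g (c a), g (c b)} : Set ℂ)) :
    Set.Finite ((fun f : ℂ ≃ᵢ ℂ => f '' (c '' Set.Icc a b)) '' F) := by
  obtain ⟨h⟩ := hΓ
  have ha : a ∈ Icc a b := left_mem_Icc.2 hab.le
  have hb : b ∈ Icc a b := right_mem_Icc.2 hab.le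
  have hd : 0 < dist (c a) (c b) := dist_pos.2 fun hcab => hab.ne (hinj ha hb hcab)
  refine finite_of_isPreconnected_subset_of_homeomorph_sphere h hd ?_ ?_ ?_ ?_
  · rintro _ ⟨f, hf, rfl⟩
    exact hsub f hf
  · rintro _ ⟨f, -, rfl⟩
    exact (isPreconnected_Icc.image c hc).image f f.continuous.continuousOn
  · rintro _ ⟨f, -, rfl⟩
    exact ⟨f (c a), mem_image_of_mem f (mem_image_of_mem c ha), f (c b),
      mem_image_of_mem f (mem_image_of_mem c hb), (f.dist_eq _ _).ge⟩
  · rintro _ ⟨f, hf, rfl⟩ _ ⟨g, hg, rfl⟩ hfg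
    exact (toFinite _).subset ((hdisj f hf g hg hfg).trans inter_subset_left)
end

section
/- If F and G are multicurves in the Euclidean plane with ∪F = ∪G (they have the same underlying point set), then F and G are equidecomposable. -/
open Metric Set

noncomputable section

/-- A parameterized continuous simple curve in the plane (identified with ℂ):
a continuous injective map on a nondegenerate compact interval. -/
structure SimpleCurve where
  a : ℝ
  b : ℝ
  hab : a < b
  f : ℝ → ℂ
  cont : ContinuousOn f (Set.Icc a b)
  inj : Set.InjOn f (Set.Icc a b)

/-- The point set of a simple curve. -/
def SimpleCurve.carrier (c : SimpleCurve) : Set ℂ := c.f '' Set.Icc c.a c.b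

/-- The endpoints of a simple curve. -/
def SimpleCurve.endpoints (c : SimpleCurve) : Set ℂ := {c.f c.a, c.f c.b}

/-- Two simple curves are congruent if an isometry of the plane maps one onto the
other. -/
def SimpleCurve.Congr (c d : SimpleCurve) : Prop :=
  ∃ g : ℂ ≃ᵢ ℂ, g '' c.carrier = d.carrier

/-- The underlying point set of a family of simple curves. -/
def MCUnion (F : Set SimpleCurve) : Set ℂ := ⋃ c ∈ F, c.carrier

/-- A multicurve: a finite family of continuous simple curves such that every point of
the plane belongs to at most one member, or is an endpoint of exactly two members. -/
def IsMulticurve (F : Set SimpleCurve) : Prop :=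
  F.Finite ∧ ∀ p : ℂ,
    ({c ∈ F | p ∈ c.carrier}).Subsingleton ∨
    (∃ c d : SimpleCurve, c ∈ F ∧ d ∈ F ∧ c ≠ d ∧
      p ∈ c.endpoints ∧ p ∈ d.endpoints ∧ {e ∈ F | p ∈ e.carrier} = {c, d})

/-- `G` is a partition of the multicurve `F`: `G` is a multicurve with the same
underlying point set, and every member of `F` is the union of some members of `G`. -/
def IsPartitionOf (G F : Set SimpleCurve) : Prop :=
  IsMulticurve G ∧ MCUnion G = MCUnion F ∧
    ∀ c ∈ F, ∃ H ⊆ G, c.carrier = MCUnion H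

/-- Two multicurves are equidecomposable if they admit partitions whose members are
matched bijectively into congruent pairs. -/
def Equidecomposable (F G : Set SimpleCurve) : Prop :=
  ∃ F' G' : Set SimpleCurve, IsPartitionOf F' F ∧ IsPartitionOf G' G ∧
    ∃ e : F' ≃ G', ∀ c : F', SimpleCurve.Congr c.1 (e c).1

/-!
The common refinement of `F` and `G` partitions both, so the identity matching works. Its
members are the restrictions of each `d ∈ G` to the nondegenerate connected components of the
parameter sets `{t | d t ∈ c}`, `c ∈ F`. As members of a multicurve meet only at endpoints, these
finitely many closed sets covering the parameter interval of `d` overlap in finitely many points,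
so a one-sided neighbourhood of each parameter lies in one of them. Hence the pieces cover, and
a piece starts at `d.a` or over an endpoint of `c`, so there are finitely many of them.
-/

open Filter Topology

section LocalCover

lemma IsPreconnected.subset_of_mem_of_finite_closed_cover {X ι : Type*} [TopologicalSpace X]
    {J : Set X} (hJ : IsPreconnected J) {s : Set ι} (hs : s.Finite) {K : ι → Set X}
    (hK : ∀ i ∈ s, IsClosed (K i)) (hcov : J ⊆ ⋃ i ∈ s, K i)
    (hdisj : s.Pairwise fun i j => J ∩ (K i ∩ K j) = ∅) {i : ι} (hi : i ∈ s) {x : X}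
    (hxJ : x ∈ J) (hxK : x ∈ K i) : J ⊆ K i := by
  set V := ⋃ j ∈ s \ {i}, K j
  have hJV : J ∩ (K i ∩ V) = ∅ := by
    refine eq_empty_iff_forall_notMem.mpr fun y ⟨hyJ, hyi, hyV⟩ => ?_
    obtain ⟨j, hj, hyj⟩ := mem_iUnion₂.mp hyV
    exact (eq_empty_iff_forall_notMem.mp (hdisj hi hj.1 (Ne.symm hj.2))) y ⟨hyJ, hyi, hyj⟩
  have hcov' : J ⊆ K i ∪ V := fun y hy => by
    obtain ⟨j, hj, hyj⟩ := mem_iUnion₂.mp (hcov hy)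
    by_cases hji : j = i
    · exact Or.inl (hji ▸ hyj)
    · exact Or.inr (mem_iUnion₂.mpr ⟨j, ⟨hj, hji⟩, hyj⟩)
  refine (isPreconnected_iff_subset_of_disjoint_closed.mp hJ _ _ (hK i hi)
    (hs.sdiff.isClosed_biUnion fun j hj => hK j hj.1) hcov' hJV).resolve_right fun hJV' => ?_
  exact (eq_empty_iff_forall_notMem.mp hJV) x ⟨hxJ, hxK, hJV' hxJ⟩

variable {α ι : Type*} [ConditionallyCompleteLinearOrder α] [TopologicalSpace α] [OrderTopology α]
  [DenselyOrdered α] {s : Set ι} {K : ι → Set α} {a b : α}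

lemma exists_Icc_subset_of_finite_closed_cover_Ioc (hs : s.Finite)
    (hK : ∀ i ∈ s, IsClosed (K i)) (hKK : s.Pairwise fun i j => (K i ∩ K j).Finite)
    (hcov : Ioc a b ⊆ ⋃ i ∈ s, K i) (hab : a < b) : ∃ i ∈ s, ∃ c ∈ Ioc a b, Icc a c ⊆ K i := by
  set B := ⋃ i ∈ s, ⋃ j ∈ s \ {i}, K i ∩ K j
  have hB : B.Finite := hs.biUnion fun i hi =>
    hs.sdiff.biUnion fun j hj => hKK hi hj.1 (Ne.symm hj.2)
  have hBc : Bᶜ ∈ 𝓝[>] a :=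
    (nhdsWithin_mono a fun x (hx : a < x) => hx.ne').trans (nhdsNE_le_cofinite a)
      hB.compl_mem_cofinite
  obtain ⟨u, hau, hu⟩ := (mem_nhdsGT_iff_exists_Ioo_subset' hab).mp
    (inter_mem hBc (Ioo_mem_nhdsGT hab))
  obtain ⟨c, hac, hcu⟩ := exists_between hau
  have hJ : Ioc a c ⊆ Bᶜ ∩ Ioo a b := (Ioc_subset_Ioo_right hcu).trans hu
  have hc : c ∈ Ioc a b := Ioo_subset_Ioc_self (hJ ⟨hac, le_rfl⟩).2
  obtain ⟨i, hi, hci⟩ := mem_iUnion₂.mp (hcov hc)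
  have hJK : Ioc a c ⊆ K i := by
    refine isPreconnected_Ioc.subset_of_mem_of_finite_closed_cover hs hK
      ((Ioc_subset_Ioc_right hc.2).trans hcov) (fun j hj k hk hjk => ?_) hi ⟨hac, le_rfl⟩ hci
    refine eq_empty_iff_forall_notMem.mpr fun x ⟨hx, hxj, hxk⟩ => (hJ hx).1 ?_
    exact mem_iUnion₂.mpr ⟨j, hj, mem_iUnion₂.mpr ⟨k, ⟨hk, Ne.symm hjk⟩, hxj, hxk⟩⟩
  refine ⟨i, hi, c, hc, ?_⟩
  rw [← closure_Ioc hac.ne]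
  exact closure_minimal hJK (hK i hi)

lemma exists_Icc_subset_of_finite_closed_cover_Ico (hs : s.Finite)
    (hK : ∀ i ∈ s, IsClosed (K i)) (hKK : s.Pairwise fun i j => (K i ∩ K j).Finite)
    (hcov : Ico a b ⊆ ⋃ i ∈ s, K i) (hab : a < b) : ∃ i ∈ s, ∃ c ∈ Ico a b, Icc c b ⊆ K i := by
  obtain ⟨i, hi, c, hc, hcK⟩ := exists_Icc_subset_of_finite_closed_cover_Ioc (α := αᵒᵈ)
    (a := OrderDual.toDual b) (b := OrderDual.toDual a) hs hK hKK (by rwa [Ioc_toDual]) hab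
  exact ⟨i, hi, OrderDual.ofDual c, ⟨hc.2, hc.1⟩, fun x hx => hcK ⟨hx.2, hx.1⟩⟩

end LocalCover

lemma IsClosed.connectedComponentIn {X : Type*} [TopologicalSpace X] {S : Set X}
    (hS : IsClosed S) (x : X) : IsClosed (connectedComponentIn S x) := by
  by_cases hx : x ∈ S
  · refine isClosed_of_closure_subset <|
      isPreconnected_connectedComponentIn.closure.subset_connectedComponentIn
        (subset_closure (mem_connectedComponentIn hx)) ?_
    exact hS.closure_subset_iff.mpr (connectedComponentIn_subset S x)
  · rw [connectedComponentIn_eq_empty hx]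
    exact isClosed_empty

lemma eq_and_eq_or_eq_and_eq_of_finite_Icc_inter_Icc {α : Type*} [LinearOrder α]
    [DenselyOrdered α] {u v u' v' t : α} (huv : u < v) (huv' : u' < v')
    (hfin : (Icc u v ∩ Icc u' v').Finite) (ht : t ∈ Icc u v) (ht' : t ∈ Icc u' v') :
    (t = v ∧ t = u') ∨ (t = u ∧ t = v') := by
  rw [Icc_inter_Icc] at hfin
  have hle : min v v' ≤ max u u' := not_lt.mp fun h => Icc_infinite h hfin
  grind [min_le_iff, le_max_iff]

namespace SimpleCurve

variable {c d : SimpleCurve} {A B : Set ℂ} {t : ℝ}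

lemma ext (ha : c.a = d.a) (hb : c.b = d.b) (hf : c.f = d.f) : c = d := by
  cases c; cases d; cases ha; cases hb; cases hf; rfl

lemma isClosed_carrier (d : SimpleCurve) : IsClosed d.carrier :=
  (isCompact_Icc.image_of_continuousOn d.cont).isClosed

lemma Congr.refl (d : SimpleCurve) : d.Congr d :=
  ⟨IsometryEquiv.refl ℂ, image_id d.carrier⟩

def restrict (d : SimpleCurve) {u v : ℝ} (huv : u < v) (hs : Icc u v ⊆ Icc d.a d.b) :
    SimpleCurve :=
  ⟨u, v, huv, d.f, d.cont.mono hs, d.inj.mono hs⟩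

def preimage (d : SimpleCurve) (A : Set ℂ) : Set ℝ := Icc d.a d.b ∩ d.f ⁻¹' A

lemma preimage_subset_Icc : d.preimage A ⊆ Icc d.a d.b := inter_subset_left

lemma preimage_mono (h : A ⊆ B) : d.preimage A ⊆ d.preimage B :=
  inter_subset_inter_right _ (Set.preimage_mono h)

lemma preimage_inter : d.preimage (A ∩ B) = d.preimage A ∩ d.preimage B := by
  simp only [SimpleCurve.preimage, Set.preimage_inter]
  exact inter_inter_distrib_left _ _ _

lemma image_preimage (h : A ⊆ d.carrier) : d.f '' d.preimage A = A := by
  rw [SimpleCurve.preimage, image_inter_preimage]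
  exact inter_eq_right.mpr h

lemma isClosed_preimage (hA : IsClosed A) : IsClosed (d.preimage A) :=
  d.cont.preimage_isClosed_of_isClosed isClosed_Icc hA

lemma finite_preimage (hA : A.Finite) : (d.preimage A).Finite :=
  Finite.of_finite_image (hA.subset ((image_mono inter_subset_right).trans
    (image_preimage_subset _ _))) (d.inj.mono inter_subset_left)

/-- On its compact parameter interval a simple curve is a closed embedding. -/
lemma isPreconnected_preimage (hA : IsPreconnected A) (h : A ⊆ d.carrier) :
    IsPreconnected (d.preimage A) := by
  have hT := (hA.preimage_of_isClosedMap d.inj.injective d.cont.domRestrict.isClosedMap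
    (by rwa [range_domRestrict])).image _ continuous_subtype_val.continuousOn
  rwa [domRestrict_eq, Set.preimage_comp, Subtype.image_preimage_coe] at hT

lemma apply_mem_endpoints_iff (ht : t ∈ Icc d.a d.b) :
    d.f t ∈ d.endpoints ↔ t = d.a ∨ t = d.b := by
  simp only [endpoints, mem_insert_iff, mem_singleton_iff,
    d.inj.eq_iff ht (left_mem_Icc.mpr d.hab.le), d.inj.eq_iff ht (right_mem_Icc.mpr d.hab.le)]

lemma Icc_subset_biUnion_preimage {X : Set SimpleCurve} (h : d.carrier ⊆ MCUnion X) :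
    Icc d.a d.b ⊆ ⋃ x ∈ X, d.preimage x.carrier := fun t ht => by
  obtain ⟨x, hx, hdx⟩ := mem_iUnion₂.mp (h ⟨t, ht, rfl⟩)
  exact mem_iUnion₂.mpr ⟨x, hx, ht, hdx⟩

end SimpleCurve

namespace IsMulticurve

variable {X : Set SimpleCurve} {x y z d : SimpleCurve} {p : ℂ} {t : ℝ}

lemma mem_endpoints_of_ne (hX : IsMulticurve X) (hx : x ∈ X) (hy : y ∈ X) (hxy : x ≠ y)
    (hpx : p ∈ x.carrier) (hpy : p ∈ y.carrier) : p ∈ x.endpoints := by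
  rcases hX.2 p with hss | ⟨c, d, -, -, -, hpc, hpd, hcd⟩
  · exact absurd (hss ⟨hx, hpx⟩ ⟨hy, hpy⟩) hxy
  · have hxcd : x ∈ ({c, d} : Set SimpleCurve) := hcd ▸ ⟨hx, hpx⟩
    rcases hxcd with rfl | rfl
    exacts [hpc, hpd]

lemma eq_or_eq_of_ne (hX : IsMulticurve X) (hx : x ∈ X) (hy : y ∈ X) (hz : z ∈ X) (hyz : y ≠ z)
    (hpx : p ∈ x.carrier) (hpy : p ∈ y.carrier) (hpz : p ∈ z.carrier) : x = y ∨ x = z := by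
  rcases hX.2 p with hss | ⟨c, d, -, -, -, -, -, hcd⟩
  · exact absurd (hss ⟨hy, hpy⟩ ⟨hz, hpz⟩) hyz
  · have hx' : x ∈ ({c, d} : Set SimpleCurve) := hcd ▸ ⟨hx, hpx⟩
    have hy' : y ∈ ({c, d} : Set SimpleCurve) := hcd ▸ ⟨hy, hpy⟩
    have hz' : z ∈ ({c, d} : Set SimpleCurve) := hcd ▸ ⟨hz, hpz⟩
    simp only [mem_insert_iff, mem_singleton_iff] at hx' hy' hz'
    rcases hx' with rfl | rfl <;> rcases hy' with rfl | rfl <;> rcases hz' with rfl | rfl <;>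
      simp_all

lemma inter_finite (hX : IsMulticurve X) (hx : x ∈ X) (hy : y ∈ X) (hxy : x ≠ y) :
    (x.carrier ∩ y.carrier).Finite :=
  ((finite_singleton _).insert _).subset fun _ hp => hX.mem_endpoints_of_ne hx hy hxy hp.1 hp.2

lemma pairwise_finite_preimage (hX : IsMulticurve X) (d : SimpleCurve) :
    X.Pairwise fun x y => (d.preimage x.carrier ∩ d.preimage y.carrier).Finite :=
  fun _ hx _ hy hxy => by
    simpa only [d.preimage_inter] using d.finite_preimage (hX.inter_finite hx hy hxy)

lemma exists_Icc_subset_preimage_right (hX : IsMulticurve X) (hd : d.carrier ⊆ MCUnion X)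
    (hat : d.a ≤ t) (htb : t < d.b) : ∃ x ∈ X, ∃ v ∈ Ioc t d.b, Icc t v ⊆ d.preimage x.carrier :=
  exists_Icc_subset_of_finite_closed_cover_Ioc hX.1
    (fun x _ => d.isClosed_preimage x.isClosed_carrier) (hX.pairwise_finite_preimage d)
    ((Ioc_subset_Icc_self.trans (Icc_subset_Icc_left hat)).trans
      (d.Icc_subset_biUnion_preimage hd)) htb

lemma exists_Icc_subset_preimage_left (hX : IsMulticurve X) (hd : d.carrier ⊆ MCUnion X)
    (hat : d.a < t) (htb : t ≤ d.b) : ∃ x ∈ X, ∃ u ∈ Ico d.a t, Icc u t ⊆ d.preimage x.carrier :=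
  exists_Icc_subset_of_finite_closed_cover_Ico hX.1
    (fun x _ => d.isClosed_preimage x.isClosed_carrier) (hX.pairwise_finite_preimage d)
    ((Ico_subset_Icc_self.trans (Icc_subset_Icc_right htb)).trans
      (d.Icc_subset_biUnion_preimage hd)) hat

lemma exists_Icc_subset_preimage (hX : IsMulticurve X) (hd : d.carrier ⊆ MCUnion X)
    (ht : t ∈ Icc d.a d.b) :
    ∃ x ∈ X, ∃ u v, u < v ∧ t ∈ Icc u v ∧ Icc u v ⊆ d.preimage x.carrier := by
  rcases ht.2.lt_or_eq with htb | rfl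
  · obtain ⟨x, hx, v, hv, hsub⟩ := hX.exists_Icc_subset_preimage_right hd ht.1 htb
    exact ⟨x, hx, t, v, hv.1, left_mem_Icc.mpr hv.1.le, hsub⟩
  · obtain ⟨x, hx, u, hu, hsub⟩ := hX.exists_Icc_subset_preimage_left hd d.hab le_rfl
    exact ⟨x, hx, u, d.b, hu.2, right_mem_Icc.mpr hu.2.le, hsub⟩

end IsMulticurve

lemma isMulticurve_of_forall_mem_endpoints {X : Set SimpleCurve} (hX : X.Finite)
    (h : ∀ p x y, x ∈ X → y ∈ X → x ≠ y → p ∈ x.carrier → p ∈ y.carrier →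
      p ∈ x.endpoints ∧ ∀ z ∈ X, p ∈ z.carrier → z = x ∨ z = y) :
    IsMulticurve X := by
  refine ⟨hX, fun p => or_iff_not_imp_left.mpr fun hp => ?_⟩
  obtain ⟨x, ⟨hx, hpx⟩, y, ⟨hy, hpy⟩, hxy⟩ := not_subsingleton_iff.mp hp
  refine ⟨x, y, hx, hy, hxy, (h p x y hx hy hxy hpx hpy).1,
    (h p y x hy hx hxy.symm hpy hpx).1, Subset.antisymm ?_ ?_⟩
  · exact fun z ⟨hz, hpz⟩ => (h p x y hx hy hxy hpx hpy).2 z hz hpz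
  · rintro z (rfl | rfl)
    exacts [⟨hx, hpx⟩, ⟨hy, hpy⟩]

/-- `e` is `d` restricted to a nondegenerate connected component of the parameters of `d`
lying on `c`. -/
def IsPiece (c d e : SimpleCurve) : Prop :=
  e.f = d.f ∧ connectedComponentIn (d.preimage c.carrier) e.a = Icc e.a e.b

namespace IsPiece

variable {F : Set SimpleCurve} {c c' d e e' : SimpleCurve} {p : ℂ} {t : ℝ}

lemma Icc_subset_preimage (he : IsPiece c d e) : Icc e.a e.b ⊆ d.preimage c.carrier :=
  he.2 ▸ connectedComponentIn_subset _ _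

lemma Icc_subset (he : IsPiece c d e) : Icc e.a e.b ⊆ Icc d.a d.b :=
  he.Icc_subset_preimage.trans SimpleCurve.preimage_subset_Icc

lemma carrier_eq (he : IsPiece c d e) : e.carrier = d.f '' Icc e.a e.b := by
  rw [SimpleCurve.carrier, he.1]

lemma endpoints_eq (he : IsPiece c d e) : e.endpoints = {d.f e.a, d.f e.b} := by
  rw [SimpleCurve.endpoints, he.1]

lemma carrier_subset_left (he : IsPiece c d e) : e.carrier ⊆ c.carrier := by
  rw [he.carrier_eq]
  rintro _ ⟨t, ht, rfl⟩
  exact (he.Icc_subset_preimage ht).2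

lemma carrier_subset_right (he : IsPiece c d e) : e.carrier ⊆ d.carrier := by
  rw [he.carrier_eq]
  exact image_mono he.Icc_subset

lemma subset_Icc_of_isPreconnected (he : IsPiece c d e) {T : Set ℝ} (hT : IsPreconnected T)
    (hTS : T ⊆ d.preimage c.carrier) (hx : (T ∩ Icc e.a e.b).Nonempty) : T ⊆ Icc e.a e.b := by
  obtain ⟨x, hxT, hxe⟩ := hx
  rw [← he.2, connectedComponentIn_eq (he.2 ▸ hxe)]
  exact hT.subset_connectedComponentIn hxT hTS

lemma eq_of_mem_Icc (he : IsPiece c d e) (he' : IsPiece c d e') (ht : t ∈ Icc e.a e.b)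
    (ht' : t ∈ Icc e'.a e'.b) : e = e' := by
  have h : Icc e.a e.b = Icc e'.a e'.b :=
    (he.subset_Icc_of_isPreconnected isPreconnected_Icc he'.Icc_subset_preimage ⟨t, ht', ht⟩).antisymm'
      (he'.subset_Icc_of_isPreconnected isPreconnected_Icc he.Icc_subset_preimage ⟨t, ht, ht'⟩)
  obtain ⟨ha, hb⟩ := (Icc_eq_Icc_iff e.hab.le).mp h
  exact SimpleCurve.ext ha hb (he.1.trans he'.1.symm)

lemma eq_of_mem_carrier (he : IsPiece c d e) (he' : IsPiece c d e') (hp : p ∈ e.carrier)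
    (hp' : p ∈ e'.carrier) : e = e' := by
  rw [he.carrier_eq] at hp
  rw [he'.carrier_eq] at hp'
  obtain ⟨t, ht, rfl⟩ := hp
  obtain ⟨t', ht', htt'⟩ := hp'
  obtain rfl : t' = t := d.inj (he'.Icc_subset ht') (he.Icc_subset ht) htt'
  exact he.eq_of_mem_Icc he' ht ht'

/-- The parameter intervals of the two pieces have finite intersection. -/
lemma mem_endpoints_of_ne (hF : IsMulticurve F) (hc : c ∈ F) (hc' : c' ∈ F) (hcc' : c ≠ c')
    (he : IsPiece c d e) (he' : IsPiece c' d e') (hp : p ∈ e.carrier) (hp' : p ∈ e'.carrier) :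
    p ∈ e.endpoints ∧ p ∉ d.endpoints := by
  rw [he.carrier_eq] at hp
  rw [he'.carrier_eq] at hp'
  obtain ⟨t, ht, rfl⟩ := hp
  obtain ⟨t', ht', htt'⟩ := hp'
  obtain rfl : t' = t := d.inj (he'.Icc_subset ht') (he.Icc_subset ht) htt'
  have hfin : (Icc e.a e.b ∩ Icc e'.a e'.b).Finite :=
    (d.finite_preimage (hF.inter_finite hc hc' hcc')).subset <| by
      rw [d.preimage_inter]
      exact inter_subset_inter he.Icc_subset_preimage he'.Icc_subset_preimage
  have hmeet := eq_and_eq_or_eq_and_eq_of_finite_Icc_inter_Icc e.hab e'.hab hfin ht ht'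
  have ha := (he.Icc_subset (left_mem_Icc.mpr e.hab.le)).1
  have ha' := (he'.Icc_subset (left_mem_Icc.mpr e'.hab.le)).1
  have hb := (he.Icc_subset (right_mem_Icc.mpr e.hab.le)).2
  have hb' := (he'.Icc_subset (right_mem_Icc.mpr e'.hab.le)).2
  rw [he.endpoints_eq, d.apply_mem_endpoints_iff (he.Icc_subset ht)]
  constructor
  · rcases hmeet with ⟨rfl, -⟩ | ⟨rfl, -⟩
    exacts [Or.inr rfl, Or.inl rfl]
  · rintro (rfl | rfl) <;> rcases hmeet with ⟨h, h'⟩ | ⟨h, h'⟩ <;> linarith [e.hab, e'.hab]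

lemma eq_of_mem_endpoints (hF : IsMulticurve F) (hc : c ∈ F) (hc' : c' ∈ F)
    (he : IsPiece c d e) (he' : IsPiece c' d e') (hp : p ∈ e.carrier) (hp' : p ∈ e'.carrier)
    (hpd : p ∈ d.endpoints) : e = e' := by
  by_cases hcc' : c = c'
  · subst hcc'
    exact he.eq_of_mem_carrier he' hp hp'
  · exact absurd hpd (he.mem_endpoints_of_ne hF hc hc' hcc' he' hp hp').2

lemma mem_endpoints_of_mem_endpoints (he : IsPiece c d e) (hp : p ∈ e.carrier)
    (hpd : p ∈ d.endpoints) : p ∈ e.endpoints := by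
  rw [he.carrier_eq] at hp
  obtain ⟨t, ht, rfl⟩ := hp
  have ha := (he.Icc_subset (left_mem_Icc.mpr e.hab.le)).1
  have hb := (he.Icc_subset (right_mem_Icc.mpr e.hab.le)).2
  rw [d.apply_mem_endpoints_iff (he.Icc_subset ht)] at hpd
  rw [he.endpoints_eq]
  rcases hpd with rfl | rfl
  · exact Or.inl (by rw [le_antisymm ht.1 ha])
  · exact Or.inr (by rw [le_antisymm hb ht.2]; rfl)

/-- Left of a piece starting inside `d` lies an arc of `d` on another member `x` of `F`, so the
start point is on two members of `F`. -/
lemma left_eq_or_mem_endpoints (hF : IsMulticurve F) (hc : c ∈ F) (hd : d.carrier ⊆ MCUnion F)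
    (he : IsPiece c d e) : e.a = d.a ∨ d.f e.a ∈ c.endpoints := by
  have hea : e.a ∈ Icc d.a d.b := he.Icc_subset (left_mem_Icc.mpr e.hab.le)
  refine hea.1.eq_or_lt.imp Eq.symm fun hlt => ?_
  obtain ⟨x, hx, u, hu, hsub⟩ := hF.exists_Icc_subset_preimage_left hd hlt hea.2
  have hxc : x ≠ c := by
    rintro rfl
    have := he.subset_Icc_of_isPreconnected isPreconnected_Icc hsub
      ⟨e.a, right_mem_Icc.mpr hu.2.le, left_mem_Icc.mpr e.hab.le⟩
    exact (this (left_mem_Icc.mpr hu.2.le)).1.not_gt hu.2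
  exact hF.mem_endpoints_of_ne hc hx hxc.symm (he.Icc_subset_preimage
    (left_mem_Icc.mpr e.hab.le)).2 (hsub (right_mem_Icc.mpr hu.2.le)).2

end IsPiece

lemma exists_isPiece_of_isPreconnected {c d : SimpleCurve} {T : Set ℝ} (hT : IsPreconnected T)
    (hTS : T ⊆ d.preimage c.carrier) (hTnt : T.Nontrivial) {t : ℝ} (ht : t ∈ T) :
    ∃ e, IsPiece c d e ∧ t ∈ Icc e.a e.b := by
  set C := connectedComponentIn (d.preimage c.carrier) t
  have hTC : T ⊆ C := hT.subset_connectedComponentIn ht hTS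
  have hCd : C ⊆ Icc d.a d.b :=
    (connectedComponentIn_subset _ _).trans SimpleCurve.preimage_subset_Icc
  have hC : C = Icc (sInf C) (sSup C) :=
    eq_Icc_of_connected_compact ⟨⟨t, hTC ht⟩, isPreconnected_connectedComponentIn⟩
      (isCompact_Icc.of_isClosed_subset
        ((d.isClosed_preimage c.isClosed_carrier).connectedComponentIn t) hCd)
  have hlt : sInf C < sSup C := by
    by_contra! hle
    exact hTnt.not_subsingleton ((subsingleton_Icc_of_ge hle).anti (hC ▸ hTC))
  refine ⟨d.restrict hlt (hC ▸ hCd), ⟨rfl, ?_⟩, hC ▸ hTC ht⟩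
  change connectedComponentIn _ (sInf C) = Icc (sInf C) (sSup C)
  rw [← connectedComponentIn_eq (hC.symm.subset (left_mem_Icc.mpr hlt.le))]
  exact hC

section CommonRefinement

variable {F G : Set SimpleCurve} {c d : SimpleCurve} {p : ℂ}

def commonRefinement (F G : Set SimpleCurve) : Set SimpleCurve :=
  {e | ∃ c ∈ F, ∃ d ∈ G, IsPiece c d e}

lemma subset_mcUnion (hd : d ∈ G) : d.carrier ⊆ MCUnion G :=
  subset_biUnion_of_mem (u := SimpleCurve.carrier) hd

/-- A piece is determined by its start point, which is `d.a` or lies over an endpoint of `c`. -/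
lemma finite_setOf_isPiece (hF : IsMulticurve F) (hc : c ∈ F) (hd : d.carrier ⊆ MCUnion F) :
    {e | IsPiece c d e}.Finite := by
  refine Finite.of_finite_image (f := SimpleCurve.a)
    ((d.finite_preimage (A := c.endpoints) ((finite_singleton _).insert _)).insert d.a
      |>.subset ?_) ?_
  · rintro _ ⟨e, he, rfl⟩
    exact (he.left_eq_or_mem_endpoints hF hc hd).imp id fun h =>
      ⟨he.Icc_subset (left_mem_Icc.mpr e.hab.le), h⟩
  · exact fun e he e' he' h => he.eq_of_mem_Icc he' (left_mem_Icc.mpr e.hab.le)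
      (by rw [h]; exact left_mem_Icc.mpr e'.hab.le)

lemma commonRefinement_finite (hF : IsMulticurve F) (hG : G.Finite)
    (hGF : MCUnion G ⊆ MCUnion F) : (commonRefinement F G).Finite :=
  (hF.1.biUnion fun _ hc => hG.biUnion fun _ hd =>
    finite_setOf_isPiece hF hc ((subset_mcUnion hd).trans hGF)).subset
      fun _ ⟨_, hc, _, hd, he⟩ => mem_biUnion hc (mem_biUnion hd he)

lemma isMulticurve_commonRefinement (hF : IsMulticurve F) (hG : IsMulticurve G)
    (hGF : MCUnion G ⊆ MCUnion F) : IsMulticurve (commonRefinement F G) := by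
  refine isMulticurve_of_forall_mem_endpoints (commonRefinement_finite hF hG.1 hGF) ?_
  rintro p e₁ e₂ ⟨c₁, hc₁, d₁, hd₁, he₁⟩ ⟨c₂, hc₂, d₂, hd₂, he₂⟩ hne hp₁ hp₂
  have hpd₁ := he₁.carrier_subset_right hp₁
  have hpd₂ := he₂.carrier_subset_right hp₂
  by_cases hd : d₁ = d₂
  · subst hd
    have hc : c₁ ≠ c₂ := by
      rintro rfl
      exact hne (he₁.eq_of_mem_carrier he₂ hp₁ hp₂)
    obtain ⟨hpe₁, hpd⟩ := he₁.mem_endpoints_of_ne hF hc₁ hc₂ hc he₂ hp₁ hp₂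
    refine ⟨hpe₁, fun e ⟨c, hc', d, hd, he⟩ hp => ?_⟩
    obtain rfl : d = d₁ := by
      by_contra hdd
      exact hpd (hG.mem_endpoints_of_ne hd₁ hd (Ne.symm hdd) hpd₁ (he.carrier_subset_right hp))
    rcases hF.eq_or_eq_of_ne hc' hc₁ hc₂ hc (he.carrier_subset_left hp)
      (he₁.carrier_subset_left hp₁) (he₂.carrier_subset_left hp₂) with rfl | rfl
    exacts [Or.inl (he.eq_of_mem_carrier he₁ hp hp₁), Or.inr (he.eq_of_mem_carrier he₂ hp hp₂)]
  · have hpe₁ := hG.mem_endpoints_of_ne hd₁ hd₂ hd hpd₁ hpd₂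
    have hpe₂ := hG.mem_endpoints_of_ne hd₂ hd₁ (Ne.symm hd) hpd₂ hpd₁
    refine ⟨he₁.mem_endpoints_of_mem_endpoints hp₁ hpe₁, fun e ⟨c, hc, d, hd', he⟩ hp => ?_⟩
    rcases hG.eq_or_eq_of_ne hd' hd₁ hd₂ hd (he.carrier_subset_right hp) hpd₁ hpd₂ with rfl | rfl
    exacts [Or.inl (he.eq_of_mem_endpoints hF hc hc₁ he₁ hp hp₁ hpe₁),
      Or.inr (he.eq_of_mem_endpoints hF hc hc₂ he₂ hp hp₂ hpe₂)]

lemma exists_isPiece_of_mem_right (hF : IsMulticurve F) (hd : d.carrier ⊆ MCUnion F)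
    (hp : p ∈ d.carrier) : ∃ c ∈ F, ∃ e, IsPiece c d e ∧ p ∈ e.carrier := by
  obtain ⟨t, ht, rfl⟩ := hp
  obtain ⟨c, hc, u, v, huv, htuv, hsub⟩ := hF.exists_Icc_subset_preimage hd ht
  obtain ⟨e, he, hte⟩ :=
    exists_isPiece_of_isPreconnected isPreconnected_Icc hsub (Icc_infinite huv).nontrivial htuv
  exact ⟨c, hc, e, he, he.carrier_eq ▸ mem_image_of_mem _ hte⟩

/-- An arc of `c` inside some `d ∈ G` pulls back to a nondegenerate interval of parameters of `d`,
which lies in one component. -/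
lemma exists_isPiece_of_mem_left (hG : IsMulticurve G) (hc : c.carrier ⊆ MCUnion G)
    (hp : p ∈ c.carrier) : ∃ d ∈ G, ∃ e, IsPiece c d e ∧ p ∈ e.carrier := by
  obtain ⟨s, hs, rfl⟩ := hp
  obtain ⟨d, hd, u, v, huv, hsuv, hsub⟩ := hG.exists_Icc_subset_preimage hc hs
  have huvc : Icc u v ⊆ Icc c.a c.b := hsub.trans SimpleCurve.preimage_subset_Icc
  set A := c.f '' Icc u v
  have hAc : A ⊆ c.carrier := image_mono huvc
  have hAd : A ⊆ d.carrier := by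
    rintro _ ⟨r, hr, rfl⟩
    exact (hsub hr).2
  have hT : IsPreconnected (d.preimage A) :=
    d.isPreconnected_preimage (isPreconnected_Icc.image _ (c.cont.mono huvc)) hAd
  have hTnt : (d.preimage A).Nontrivial := by
    refine nontrivial_of_image d.f _ ?_
    rw [d.image_preimage hAd]
    exact (Icc_infinite huv).nontrivial.image_of_injOn (c.inj.mono huvc)
  have hsA : c.f s ∈ A := mem_image_of_mem c.f hsuv
  obtain ⟨t, ht, hts⟩ := hAd hsA
  obtain ⟨e, he, hte⟩ := exists_isPiece_of_isPreconnected hT (d.preimage_mono hAc) hTnt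
    (show t ∈ d.preimage A from ⟨ht, show d.f t ∈ A from hts ▸ hsA⟩)
  exact ⟨d, hd, e, he, hts ▸ he.carrier_eq ▸ mem_image_of_mem _ hte⟩

lemma mcUnion_commonRefinement (hF : IsMulticurve F) (hGF : MCUnion G ⊆ MCUnion F) :
    MCUnion (commonRefinement F G) = MCUnion G := by
  refine Subset.antisymm (iUnion₂_subset fun e ⟨c, hc, d, hd, he⟩ =>
    he.carrier_subset_right.trans (subset_mcUnion hd)) (iUnion₂_subset fun d hd p hp => ?_)
  obtain ⟨c, hc, e, he, hpe⟩ := exists_isPiece_of_mem_right hF ((subset_mcUnion hd).trans hGF) hp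
  exact mem_biUnion ⟨c, hc, d, hd, he⟩ hpe

lemma isPartitionOf_commonRefinement_right (hF : IsMulticurve F) (hG : IsMulticurve G)
    (hGF : MCUnion G ⊆ MCUnion F) : IsPartitionOf (commonRefinement F G) G := by
  refine ⟨isMulticurve_commonRefinement hF hG hGF, mcUnion_commonRefinement hF hGF,
    fun d hd => ⟨{e | ∃ c ∈ F, IsPiece c d e}, fun e ⟨c, hc, he⟩ => ⟨c, hc, d, hd, he⟩, ?_⟩⟩
  refine Subset.antisymm (fun p hp => ?_) (iUnion₂_subset fun e ⟨c, hc, he⟩ =>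
    he.carrier_subset_right)
  obtain ⟨c, hc, e, he, hpe⟩ := exists_isPiece_of_mem_right hF ((subset_mcUnion hd).trans hGF) hp
  exact mem_biUnion ⟨c, hc, he⟩ hpe

lemma isPartitionOf_commonRefinement_left (hF : IsMulticurve F) (hG : IsMulticurve G)
    (h : MCUnion F = MCUnion G) : IsPartitionOf (commonRefinement F G) F := by
  refine ⟨isMulticurve_commonRefinement hF hG h.ge, (mcUnion_commonRefinement hF h.ge).trans h.symm,
    fun c hc => ⟨{e | ∃ d ∈ G, IsPiece c d e}, fun e ⟨d, hd, he⟩ => ⟨c, hc, d, hd, he⟩, ?_⟩⟩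
  refine Subset.antisymm (fun p hp => ?_) (iUnion₂_subset fun e ⟨d, hd, he⟩ =>
    he.carrier_subset_left)
  obtain ⟨d, hd, e, he, hpe⟩ := exists_isPiece_of_mem_left hG ((subset_mcUnion hc).trans h.le) hp
  exact mem_biUnion ⟨d, hd, he⟩ hpe

end CommonRefinement

lemma Equidecomposable.of_isPartitionOf {F G H : Set SimpleCurve} (hF : IsPartitionOf H F)
    (hG : IsPartitionOf H G) : Equidecomposable F G :=
  ⟨H, H, hF, hG, Equiv.refl H, fun c => SimpleCurve.Congr.refl c⟩

/-- Multicurves with the same underlying point set are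
equidecomposable. -/
theorem equidecomposable_of_same_union
    (F G : Set SimpleCurve) (hF : IsMulticurve F) (hG : IsMulticurve G)
    (h : MCUnion F = MCUnion G) :
    Equidecomposable F G :=
  Equidecomposable.of_isPartitionOf (isPartitionOf_commonRefinement_left hF hG h)
    (isPartitionOf_commonRefinement_right hF hG h.ge)
end
end

section
/- Let D be a compact set in the Euclidean plane whose circumcircle is the circle C of radius r centered at a point Z. Then Z lies in the convex hull of C ∩ D. -/
open Metric Set

noncomputable section

/-- The circle of center `Z` and radius `r` is the circumcircle of `D`: the boundary of
the smallest closed disc containing `D`. -/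
def IsCircumcircle (D : Set ℂ) (Z : ℂ) (r : ℝ) : Prop :=
  D ⊆ Metric.closedBall Z r ∧
    ∀ (Z' : ℂ) (r' : ℝ), D ⊆ Metric.closedBall Z' r' → r ≤ r'

/-!
If `Z` were not in the convex hull of the contact set `S = C ∩ D`, which is compact, a linear
functional would separate `Z` from `S` with a positive margin. Moving the center slightly in
that direction brings every point of `D` near the contact set closer, while by compactness the
remaining points lie in a strictly smaller concentric disc, so they stay inside too. Thus `D`
lies in an open disc of radius `r`, hence by compactness in a smaller closed one, contradicting
minimality.
-/

open Module RealInnerProductSpace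

-- Carathéodory: in dimension `d`, convex combinations of `d + 1` points suffice.
theorem convexHull_eq_biUnion_image_stdSimplex {E : Type*} [AddCommGroup E] [Module ℝ E]
    [FiniteDimensional ℝ E] (s : Set E) :
    convexHull ℝ s = ⋃ k ∈ Finset.range (finrank ℝ E + 2),
      (fun p : (Fin k → ℝ) × (Fin k → E) => ∑ i, p.1 i • p.2 i) ''
        (stdSimplex ℝ (Fin k) ×ˢ univ.pi fun _ => s) := by
  refine subset_antisymm (fun x hx => ?_) (iUnion₂_subset fun k _ => ?_)
  · obtain ⟨ι, _, z, w, hzs, hind, hw, hw₁, rfl⟩ := eq_pos_convex_span_of_mem_convexHull hx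
    let σ := Fintype.equivFin ι
    have hcard : Fintype.card ι ≤ finrank ℝ E + 1 :=
      hind.card_le_finrank_succ.trans (Nat.succ_le_succ (Submodule.finrank_le _))
    refine mem_biUnion (Finset.mem_range.2 (by omega))
      ⟨(w ∘ σ.symm, z ∘ σ.symm), ⟨⟨?_, ?_⟩, ?_⟩, ?_⟩
    · exact fun i => (hw _).le
    · exact (σ.symm.sum_comp w).trans hw₁
    · exact fun i _ => hzs ⟨_, rfl⟩
    · exact σ.symm.sum_comp fun i => w i • z i
  · rintro _ ⟨⟨w, z⟩, ⟨hw, hz⟩, rfl⟩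
    exact (convex_convexHull ℝ s).sum_mem (fun i _ => hw.1 i) hw.2
      fun i _ => subset_convexHull ℝ s (hz i trivial)

theorem IsCompact.convexHull {E : Type*} [NormedAddCommGroup E] [NormedSpace ℝ E]
    [FiniteDimensional ℝ E] {s : Set E} (hs : IsCompact s) : IsCompact (convexHull ℝ s) := by
  rw [convexHull_eq_biUnion_image_stdSimplex]
  exact (Finset.range _).isCompact_biUnion fun k _ =>
    ((isCompact_stdSimplex ℝ (Fin k)).prod (isCompact_univ_pi fun _ => hs)).image (by fun_prop)

section InnerProductSpace

variable {E : Type*} [NormedAddCommGroup E] [InnerProductSpace ℝ E]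

theorem exists_forall_le_inner_sub_of_notMem [CompleteSpace E] {K : Set E} {Z : E}
    (hconv : Convex ℝ K) (hK : IsClosed K) (hZ : Z ∉ K) :
    ∃ e : E, ∃ δ > 0, ∀ x ∈ K, δ ≤ ⟪e, x - Z⟫ := by
  obtain ⟨f, u, hZu, hu⟩ := geometric_hahn_banach_point_closed hconv hK hZ
  refine ⟨(InnerProductSpace.toDual ℝ E).symm f, u - f Z, sub_pos.2 hZu, fun x hx => ?_⟩
  rw [InnerProductSpace.toDual_symm_apply, map_sub]
  linarith [hu x hx]

/- The new center is `Z + t • e` for a small `t > 0`: points with `⟪e, x - Z⟫ ≤ δ / 2`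
already lie in a smaller concentric ball, and the shift brings all the others closer. -/
theorem exists_subset_ball_of_le_inner {D : Set E} {Z e : E} {r δ : ℝ} [ProperSpace E]
    (hD : IsClosed D) (hsub : D ⊆ closedBall Z r) (hδ : 0 < δ)
    (hsep : ∀ x ∈ D ∩ sphere Z r, δ ≤ ⟪e, x - Z⟫) : ∃ Z' : E, D ⊆ ball Z' r := by
  set A := D ∩ {x | ⟪e, x - Z⟫ ≤ δ / 2}
  have hA : IsClosed A := hD.inter (isClosed_le (by fun_prop) continuous_const)
  have hAball : A ⊆ ball Z r := fun x ⟨hxD, hx⟩ =>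
    (hsub hxD).lt_of_ne fun hxr => by
      linarith [hsep x ⟨hxD, hxr⟩, show ⟪e, x - Z⟫ ≤ δ / 2 from hx]
  obtain ⟨r₁, hr₁, hA₁⟩ := exists_lt_subset_ball hA hAball
  obtain ⟨t, ⟨hte, hte₂⟩, ht⟩ :
      ∃ t : ℝ, (t * ‖e‖ < r - r₁ ∧ t * ‖e‖ ^ 2 < δ) ∧ 0 < t := by
    have hsmall (c a : ℝ) (ha : 0 < a) : ∀ᶠ t in nhdsWithin (0 : ℝ) (Ioi 0), t * c < a :=
      nhdsWithin_le_nhds <| (continuous_mul_const c).tendsto' 0 0 (zero_mul c) |>.eventually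
        (gt_mem_nhds ha)
    exact (((hsmall _ _ (sub_pos.2 hr₁)).and (hsmall _ _ hδ)).and self_mem_nhdsWithin).exists
  refine ⟨Z + t • e, fun x hxD => ?_⟩
  by_cases hx : ⟪e, x - Z⟫ ≤ δ / 2
  · calc dist x (Z + t • e) ≤ dist x Z + dist Z (Z + t • e) := dist_triangle _ _ _
      _ < r₁ + t * ‖e‖ := by
          rw [dist_self_add_right, norm_smul, Real.norm_of_nonneg ht.le]
          exact add_lt_add_of_lt_of_le (hA₁ ⟨hxD, hx⟩) le_rfl
      _ < r := by linarith
  · have hxr : ‖x - Z‖ ≤ r := by simpa [dist_eq_norm] using hsub hxD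
    have hexp : ‖x - (Z + t • e)‖ ^ 2 =
        ‖x - Z‖ ^ 2 - 2 * t * ⟪e, x - Z⟫ + t * (t * ‖e‖ ^ 2) := by
      rw [sub_add_eq_sub_sub, norm_sub_sq_real, norm_smul, Real.norm_of_nonneg ht.le,
        real_inner_smul_right, real_inner_comm]
      ring
    rw [mem_ball, dist_eq_norm]
    refine lt_of_pow_lt_pow_left₀ 2 ((norm_nonneg _).trans hxr) ?_
    nlinarith [mul_lt_mul_of_pos_left hte₂ ht, norm_nonneg (x - Z)]

end InnerProductSpace

theorem circumcenter_mem_convexHull_general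
    (D : Set ℂ) (hD : IsCompact D)
    (Z : ℂ) (r : ℝ) (hcirc : IsCircumcircle D Z r) :
    Z ∈ convexHull ℝ (Metric.sphere Z r ∩ D) := by
  by_contra hZ
  have hS : IsCompact (sphere Z r ∩ D) := hD.inter_left isClosed_sphere
  obtain ⟨e, δ, hδ, hsep⟩ :=
    exists_forall_le_inner_sub_of_notMem (convex_convexHull ℝ _) hS.convexHull.isClosed hZ
  obtain ⟨Z', hball⟩ := exists_subset_ball_of_le_inner hD.isClosed hcirc.1 hδ
    fun x ⟨hxD, hxS⟩ => hsep x (subset_convexHull ℝ _ ⟨hxS, hxD⟩)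
  obtain ⟨r', hr', hsub⟩ := exists_lt_subset_ball hD.isClosed hball
  exact hr'.not_ge (hcirc.2 Z' r' (hsub.trans ball_subset_closedBall))

/-- The center of the circumcircle of a compact planar set `D` lies in
the convex hull of the intersection of the circumcircle with `D`. -/
theorem circumcenter_mem_convexHull
    (D : Set ℂ) (hD : IsCompact D) (hne : D.Nonempty)
    (Z : ℂ) (r : ℝ) (hcirc : IsCircumcircle D Z r) :
    Z ∈ convexHull ℝ (Metric.sphere Z r ∩ D) :=
  circumcenter_mem_convexHull_general D hD Z r hcirc
end
end
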